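/- arXiv:1210.8209 — 2 statements merged into one kernel-verified Lean document; each statement's English description precedes it below -/
import Mathlib

section
/- Let w be a positive radial function on [0,∞) with asymptotics w(r) = A_N r^{−(N−1)/2} e^{−r}(1 + O(1/r)) as r → ∞, A_N > 0, and let η ∈ (1/2, 1). Then there exist ρ₀ > 0 and c > 0, independent of k, such that for all ρ ≥ ρ₀ and all points Q₁,…,Q_{k+1} ∈ ℝ^N with min_{i≠j}|Q_i − Q_j| ≥ ρ, one has (Σ_{i=1}^{k} e^{−η|Q_i − Q_{k+1}|})² ≤ c Σ_{i=1}^{k} w(|Q_i − Q_{k+1}|). -/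
/-!
Write `dᵢ = |Qᵢ - Q_{k+1}|` and `β = η - 1/2 > 0`. Cauchy–Schwarz with
`e^{-η d} = e^{-(1+β) d/2} e^{-β d/2}` bounds the left side by
`(Σ e^{-(1+β) dᵢ}) (Σ e^{-β dᵢ})`. Since `r^{-(N-1)/2} ≥ e^{-β r}` for large `r`, the asymptotics
give `e^{-(1+β) r} ≤ (2/A) w(r)` once `r ≥ ρ₀`, which controls the first factor. The second factor
is bounded independently of `k`: the balls of radius `ρ₀/2` around the `Qᵢ` are disjoint, and on
the ball around `Qᵢ` the function `e^{-β |x - Q_{k+1}|}` is at least `e^{-β ρ₀/2} e^{-β dᵢ}`, so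
the sum is at most a multiple of `∫ e^{-β |x|} dx < ∞`.
-/

open Real MeasureTheory Metric Filter Module
open scoped Nat

lemma exp_neg_mul_le_mul_one_add_rpow_neg {a t : ℝ} (ha : 0 < a) (ht : 0 ≤ t) (n : ℕ) :
    exp (-a * t) ≤ n ! * exp a / a ^ n * (1 + t) ^ (-(n : ℝ)) := by
  have hexp : (a * (1 + t)) ^ n / n ! ≤ exp a * exp (a * t) := by
    rw [← exp_add, show a + a * t = a * (1 + t) by ring]
    exact pow_div_factorial_le_exp _ (by positivity) n
  rw [div_le_iff₀ (by positivity)] at hexp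
  rw [rpow_neg (by positivity), rpow_natCast, ← div_eq_mul_inv, div_div, neg_mul, exp_neg,
    inv_le_comm₀ (exp_pos _) (by positivity), inv_div, div_le_iff₀ (by positivity), ← mul_pow]
  linarith

section Haar

variable {E : Type*} [NormedAddCommGroup E] [NormedSpace ℝ E] [FiniteDimensional ℝ E]
  [MeasurableSpace E] [BorelSpace E] (μ : Measure E) [μ.IsAddHaarMeasure]

lemma integrable_exp_neg_mul_norm {a : ℝ} (ha : 0 < a) :
    Integrable (fun x : E => exp (-a * ‖x‖)) μ := by
  set n := finrank ℝ E + 1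
  have hn : (finrank ℝ E : ℝ) < n := by push_cast [n]; linarith
  refine ((integrable_one_add_norm hn).const_mul (n ! * exp a / a ^ n)).mono' (by fun_prop)
    (ae_of_all _ fun x => ?_)
  rw [norm_of_nonneg (exp_pos _).le]
  exact exp_neg_mul_le_mul_one_add_rpow_neg ha (norm_nonneg x) _

lemma integrable_exp_neg_mul_dist {a : ℝ} (ha : 0 < a) (x₀ : E) :
    Integrable (fun x : E => exp (-a * dist x x₀)) μ := by
  simpa only [dist_eq_norm] using (integrable_exp_neg_mul_norm μ ha).comp_sub_right x₀

lemma exp_neg_mul_dist_mul_measureReal_ball_le {β : ℝ} (hβ : 0 < β) (y x₀ : E) (r : ℝ) :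
    exp (-β * dist y x₀) * μ.real (ball y r) ≤
      exp (β * r) * ∫ x in ball y r, exp (-β * dist x x₀) ∂μ := by
  have hmono : ∫ _ in ball y r, exp (-β * (dist y x₀ + r)) ∂μ ≤
      ∫ x in ball y r, exp (-β * dist x x₀) ∂μ := by
    refine setIntegral_mono_on (integrableOn_const measure_ball_lt_top.ne)
      (integrable_exp_neg_mul_dist μ hβ x₀).integrableOn measurableSet_ball fun x hx => ?_
    have hx₀ : dist x x₀ ≤ dist y x₀ + r := by
      linarith [dist_triangle x y x₀, mem_ball.1 hx]
    exact exp_le_exp.2 (by nlinarith)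
  rw [setIntegral_const, smul_eq_mul] at hmono
  calc exp (-β * dist y x₀) * μ.real (ball y r)
      = exp (β * r) * (μ.real (ball y r) * exp (-β * (dist y x₀ + r))) := by
        rw [show -β * dist y x₀ = β * r + -β * (dist y x₀ + r) by ring, exp_add]; ring
    _ ≤ _ := mul_le_mul_of_nonneg_left hmono (exp_pos _).le

lemma sum_exp_neg_mul_dist_mul_measureReal_ball_le {ι : Type*} [Fintype ι] {β r : ℝ}
    (hβ : 0 < β) (Q : ι → E) (hQ : Pairwise fun i j => 2 * r ≤ dist (Q i) (Q j)) (x₀ : E) :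
    (∑ i, exp (-β * dist (Q i) x₀)) * μ.real (ball 0 r) ≤
      exp (β * r) * ∫ x, exp (-β * ‖x‖) ∂μ := by
  have hdisj : Pairwise (Function.onFun Disjoint fun i => ball (Q i) r) := fun i j hij =>
    ball_disjoint_ball (by linarith [hQ hij] : r + r ≤ dist (Q i) (Q j))
  have hf := integrable_exp_neg_mul_dist μ hβ x₀
  calc (∑ i, exp (-β * dist (Q i) x₀)) * μ.real (ball 0 r)
      = ∑ i, exp (-β * dist (Q i) x₀) * μ.real (ball (Q i) r) := by
        simp only [Finset.sum_mul, Measure.addHaar_real_ball_center]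
    _ ≤ ∑ i, exp (β * r) * ∫ x in ball (Q i) r, exp (-β * dist x x₀) ∂μ :=
        Finset.sum_le_sum fun i _ => exp_neg_mul_dist_mul_measureReal_ball_le μ hβ _ _ _
    _ = exp (β * r) * ∫ x in ⋃ i, ball (Q i) r, exp (-β * dist x x₀) ∂μ := by
        rw [integral_iUnion_fintype (fun _ => measurableSet_ball) hdisj
          fun _ => hf.integrableOn, Finset.mul_sum]
    _ ≤ exp (β * r) * ∫ x, exp (-β * dist x x₀) ∂μ :=
        mul_le_mul_of_nonneg_left
          (setIntegral_le_integral hf (ae_of_all _ fun _ => (exp_pos _).le)) (exp_pos _).le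
    _ = exp (β * r) * ∫ x, exp (-β * ‖x‖) ∂μ := by
        simp only [dist_eq_norm, integral_sub_right_eq_self (fun x => exp (-β * ‖x‖)) x₀]

end Haar

lemma eventually_exp_neg_mul_le_rpow {β : ℝ} (hβ : 0 < β) (s : ℝ) :
    ∀ᶠ r in atTop, exp (-β * r) ≤ r ^ s := by
  filter_upwards [(tendsto_rpow_mul_exp_neg_mul_atTop_nhds_zero (-s) β hβ).eventually
    (ge_mem_nhds one_pos), eventually_gt_atTop 0] with r hr hr₀
  rwa [rpow_neg hr₀.le, inv_mul_le_iff₀ (rpow_pos_of_pos hr₀ s), mul_one] at hr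

section Asymptotics

variable {w : ℝ → ℝ} {A C r₁ s : ℝ}

lemma eventually_half_mul_rpow_mul_exp_le (hA : 0 < A)
    (hw : ∀ r, r₁ ≤ r → |w r - A * r ^ s * exp (-r)| ≤ C * r ^ s * exp (-r) / r) :
    ∀ᶠ r in atTop, A / 2 * (r ^ s * exp (-r)) ≤ w r := by
  filter_upwards [eventually_ge_atTop r₁, eventually_gt_atTop 0,
    eventually_ge_atTop (2 * C / A)] with r hr₁ hr hrC
  have hpos : 0 < r ^ s * exp (-r) := by positivity
  have herr : C * r ^ s * exp (-r) / r ≤ A / 2 * (r ^ s * exp (-r)) := by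
    rw [div_le_iff₀ hA] at hrC
    rw [div_le_iff₀ hr]
    nlinarith
  linarith [(abs_le.1 (hw r hr₁)).1]

lemma eventually_exp_neg_one_add_mul_le_mul (hA : 0 < A)
    (hw : ∀ r, r₁ ≤ r → |w r - A * r ^ s * exp (-r)| ≤ C * r ^ s * exp (-r) / r)
    {β : ℝ} (hβ : 0 < β) :
    ∀ᶠ r in atTop, exp (-(1 + β) * r) ≤ 2 / A * w r := by
  filter_upwards [eventually_half_mul_rpow_mul_exp_le hA hw,
    eventually_exp_neg_mul_le_rpow hβ s] with r hwr hexp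
  calc exp (-(1 + β) * r) = exp (-β * r) * exp (-r) := by rw [← exp_add]; ring_nf
    _ ≤ r ^ s * exp (-r) := mul_le_mul_of_nonneg_right hexp (exp_pos _).le
    _ = 2 / A * (A / 2 * (r ^ s * exp (-r))) := by field_simp
    _ ≤ 2 / A * w r := by gcongr

end Asymptotics

lemma sq_sum_exp_neg_mul_le {ι : Type*} (t : Finset ι) (d : ι → ℝ) {a b c : ℝ}
    (habc : a + b = 2 * c) :
    (∑ i ∈ t, exp (-c * d i)) ^ 2 ≤ (∑ i ∈ t, exp (-a * d i)) * ∑ i ∈ t, exp (-b * d i) := by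
  have hsplit : ∀ i, exp (-c * d i) = exp (-a * d i / 2) * exp (-b * d i / 2) := fun i => by
    rw [← exp_add]; congr 1; linear_combination (d i / 2) * habc
  have hsq : ∀ x, exp (x / 2) ^ 2 = exp x := fun x => by rw [sq, ← exp_add, add_halves]
  simpa only [hsplit, hsq] using Finset.sum_mul_sq_le_sq_mul_sq t
    (fun i => exp (-a * d i / 2)) fun i => exp (-b * d i / 2)

theorem stmt10_general
    (N : ℕ)
    (w : ℝ → ℝ)
    (A : ℝ) (hA : 0 < A)
    (hasymp : ∃ C₁ r₁ : ℝ, 0 < C₁ ∧ 0 < r₁ ∧ ∀ r : ℝ, r₁ ≤ r →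
      |w r - A * r ^ (-((N : ℝ) - 1) / 2) * Real.exp (-r)|
        ≤ C₁ * r ^ (-((N : ℝ) - 1) / 2) * Real.exp (-r) / r)
    (η : ℝ) (hη₀ : 1 / 2 < η) :
    ∃ ρ₀ c : ℝ, 0 < ρ₀ ∧ 0 < c ∧
      ∀ ρ : ℝ, ρ₀ ≤ ρ → ∀ k : ℕ,
        ∀ Q : Fin (k + 1) → EuclideanSpace ℝ (Fin N),
          (∀ i j : Fin (k + 1), i ≠ j → ρ ≤ dist (Q i) (Q j)) →
          (∑ i : Fin k, Real.exp (-η * dist (Q i.castSucc) (Q (Fin.last k)))) ^ 2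
            ≤ c * ∑ i : Fin k, w (dist (Q i.castSucc) (Q (Fin.last k))) := by
  obtain ⟨C₁, r₁, -, -, hasy⟩ := hasymp
  set β := η - 1 / 2
  have hβ : 0 < β := sub_pos.2 hη₀
  obtain ⟨ρ₁, hρ₁⟩ := eventually_atTop.1 (eventually_exp_neg_one_add_mul_le_mul hA hasy hβ)
  set ρ₀ := max ρ₁ 1
  set I := ∫ x : EuclideanSpace ℝ (Fin N), exp (-β * ‖x‖)
  set V := volume.real (ball (0 : EuclideanSpace ℝ (Fin N)) (ρ₀ / 2))
  have hI : 0 < I := integral_exp_pos (integrable_exp_neg_mul_norm volume hβ)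
  have hV : 0 < V := ENNReal.toReal_pos (measure_ball_pos _ _ (by positivity)).ne'
    measure_ball_lt_top.ne
  refine ⟨ρ₀, 2 / A * (exp (β * (ρ₀ / 2)) * I / V), by positivity, by positivity,
    fun ρ hρ k Q hQ => ?_⟩
  set d := fun i : Fin k => dist (Q i.castSucc) (Q (Fin.last k))
  have hd : ∀ i, ρ₁ ≤ d i := fun i =>
    ((le_max_left _ _).trans hρ).trans (hQ _ _ (Fin.castSucc_lt_last i).ne)
  have hw_lower : ∑ i, exp (-(1 + β) * d i) ≤ 2 / A * ∑ i, w (d i) := by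
    rw [Finset.mul_sum]
    exact Finset.sum_le_sum fun i _ => hρ₁ _ (hd i)
  have hpack : ∑ i, exp (-β * d i) ≤ exp (β * (ρ₀ / 2)) * I / V := by
    rw [le_div_iff₀ hV]
    refine sum_exp_neg_mul_dist_mul_measureReal_ball_le volume hβ _ (fun i j hij => ?_) _
    linarith [hQ _ _ ((Fin.castSucc_injective k).ne hij)]
  calc (∑ i, exp (-η * d i)) ^ 2
      ≤ (∑ i, exp (-(1 + β) * d i)) * ∑ i, exp (-β * d i) := sq_sum_exp_neg_mul_le _ _ (by ring)
    _ ≤ (2 / A * ∑ i, w (d i)) * (exp (β * (ρ₀ / 2)) * I / V) :=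
        mul_le_mul hw_lower hpack (Finset.sum_nonneg fun _ _ => (exp_pos _).le)
          ((Finset.sum_nonneg fun _ _ => (exp_pos _).le).trans hw_lower)
    _ = _ := by ring

/-- If `w(r) = A_N r^{−(N−1)/2} e^{−r}(1+O(1/r))` and `η ∈ (1/2, 1)`,
then for `ρ` large and `ρ`-separated points `Q₁,…,Q_{k+1}`,
`(Σᵢ₌₁ᵏ e^{−η|Qᵢ−Q_{k+1}|})² ≤ c Σᵢ₌₁ᵏ w(|Qᵢ−Q_{k+1}|)`, with `c` independent of `k`. -/
theorem stmt10
    (N : ℕ) (hN : 2 ≤ N)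
    (w : ℝ → ℝ)
    (hw_pos : ∀ r : ℝ, 0 ≤ r → 0 < w r)
    (A : ℝ) (hA : 0 < A)
    (hasymp : ∃ C₁ r₁ : ℝ, 0 < C₁ ∧ 0 < r₁ ∧ ∀ r : ℝ, r₁ ≤ r →
      |w r - A * r ^ (-((N : ℝ) - 1) / 2) * Real.exp (-r)|
        ≤ C₁ * r ^ (-((N : ℝ) - 1) / 2) * Real.exp (-r) / r)
    (η : ℝ) (hη₀ : 1 / 2 < η) (hη₁ : η < 1) :
    ∃ ρ₀ c : ℝ, 0 < ρ₀ ∧ 0 < c ∧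
      ∀ ρ : ℝ, ρ₀ ≤ ρ → ∀ k : ℕ,
        ∀ Q : Fin (k + 1) → EuclideanSpace ℝ (Fin N),
          (∀ i j : Fin (k + 1), i ≠ j → ρ ≤ dist (Q i) (Q j)) →
          (∑ i : Fin k, Real.exp (-η * dist (Q i.castSucc) (Q (Fin.last k)))) ^ 2
            ≤ c * ∑ i : Fin k, w (dist (Q i.castSucc) (Q (Fin.last k))) :=
  stmt10_general N w A hA hasymp η hη₀
end

section
/- Let w : [0,∞) → (0,∞) satisfy w(r) ≤ C₀ e^{−r} for all r ≥ ρ. Then there exist ρ₀ > 0 (depending only on N, and such that 6^N < e^{ρ₀/2}) and C > 0 (depending only on N and C₀) such that for all ρ ≥ ρ₀, all k ≥ 2 and all points Q₁,…,Q_k ∈ ℝ^N with min_{i≠j}|Q_i − Q_j| ≥ ρ, one has Σ_{j=1}^{k−1} w(|Q_j − Q_k|) ≤ C e^{−ρ}. (The proof uses that around any ball of radius ρ there are at most 6^N non-overlapping balls of radius ρ, so the number of points Q_j at distance at most ρ + (m/2)ρ from Q_k grows at most like (6^N)^m.) -/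
/-!
Sort the points `Q_j` by the annulus `ρ + n ρ / 2 ≤ |Q_j - Q_k| < ρ + (n + 1) ρ / 2` containing
them. The balls of radius `ρ / 2` around the points of the `n`-th annulus are disjoint and lie in
a ball of radius `(n + 4) ρ / 2`, so comparing volumes there are at most `(n + 4)^N ≤ 6^(N (n + 1))`
of them, and each contributes at most `C₀ e^{-ρ} (e^{-ρ/2})^n`. Once `6^N e^{-ρ/2} ≤ 1/2` the
resulting geometric series is at most `2 · 6^N C₀ e^{-ρ}`.
-/

open Real Metric MeasureTheory Module Finset
open scoped ENNReal

/-- The index `n` of the annulus `ρ + n ρ / 2 ≤ d < ρ + (n + 1) ρ / 2` containing `d ≥ ρ`. -/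
noncomputable def shellIndex (ρ d : ℝ) : ℕ := ⌊2 * (d - ρ) / ρ⌋₊

lemma add_shellIndex_mul_le {ρ d : ℝ} (hρ : 0 < ρ) (hd : ρ ≤ d) :
    ρ + shellIndex ρ d * ρ / 2 ≤ d := by
  have h := Nat.floor_le (div_nonneg (by linarith : 0 ≤ 2 * (d - ρ)) hρ.le)
  rw [le_div_iff₀ hρ] at h
  unfold shellIndex
  linarith

lemma lt_add_shellIndex_add_one_mul {ρ : ℝ} (hρ : 0 < ρ) (d : ℝ) :
    d < ρ + (shellIndex ρ d + 1) * ρ / 2 := by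
  have h := Nat.lt_floor_add_one (2 * (d - ρ) / ρ)
  rw [div_lt_iff₀ hρ] at h
  unfold shellIndex
  linarith

lemma exp_neg_le_exp_neg_mul_pow_shellIndex {ρ d : ℝ} (hρ : 0 < ρ) (hd : ρ ≤ d) :
    exp (-d) ≤ exp (-ρ) * exp (-ρ / 2) ^ shellIndex ρ d := by
  rw [← exp_nat_mul, ← exp_add, exp_le_exp]
  linarith [add_shellIndex_mul_le hρ hd]

lemma add_four_le_six_pow_succ (n : ℕ) : (n + 4 : ℝ) ≤ 6 ^ (n + 1) := by
  induction n with
  | zero => norm_num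
  | succ n ih => push_cast; rw [pow_succ]; linarith

lemma mul_exp_neg_half_le_half {a ρ : ℝ} (ha : 0 < a) (hρ : 2 * log (2 * a) ≤ ρ) :
    a * exp (-ρ / 2) ≤ 1 / 2 := by
  have h : 2 * a ≤ exp (ρ / 2) := by
    rw [← exp_log (by positivity : 0 < 2 * a), exp_le_exp]
    linarith
  rw [neg_div, exp_neg, ← div_eq_mul_inv, div_le_iff₀ (exp_pos _)]
  linarith

theorem sum_comp_le_tsum_of_card_fiber_le {ι : Type*} (s : Finset ι) (n : ι → ℕ) {g c : ℕ → ℝ}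
    (hg : ∀ m, 0 ≤ g m) (hc : ∀ m, (#{i ∈ s | n i = m} : ℝ) ≤ c m)
    (hsum : Summable fun m => c m * g m) :
    ∑ i ∈ s, g (n i) ≤ ∑' m, c m * g m := by
  classical
  have hcg (m : ℕ) : (#{i ∈ s | n i = m} : ℝ) * g m ≤ c m * g m :=
    mul_le_mul_of_nonneg_right (hc m) (hg m)
  calc ∑ i ∈ s, g (n i) = ∑ m ∈ s.image n, #{i ∈ s | n i = m} • g m := sum_comp g n
    _ ≤ ∑ m ∈ s.image n, c m * g m :=
      sum_le_sum fun m _ => (nsmul_eq_mul _ _).trans_le (hcg m)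
    _ ≤ ∑' m, c m * g m :=
      hsum.sum_le_tsum _ fun m _ => (mul_nonneg (Nat.cast_nonneg _) (hg m)).trans (hcg m)

section SeparatedPoints

variable {E : Type*} [NormedAddCommGroup E] [NormedSpace ℝ E] [FiniteDimensional ℝ E]
  [MeasurableSpace E] [BorelSpace E] {ι : Type*} (s : Finset ι) (Q : ι → E) (P : E) {ρ : ℝ}

theorem card_mul_pow_le_of_separated {R : ℝ} (hρ : 0 < ρ) (hR : 0 ≤ R)
    (hsep : ∀ i ∈ s, ∀ j ∈ s, i ≠ j → ρ ≤ dist (Q i) (Q j))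
    (hQ : ∀ i ∈ s, dist (Q i) P ≤ R) :
    (#s : ℝ) * (ρ / 2) ^ finrank ℝ E ≤ (R + ρ / 2) ^ finrank ℝ E := by
  set μ : Measure E := Measure.addHaar
  have hdisj : (s : Set ι).PairwiseDisjoint fun i => ball (Q i) (ρ / 2) :=
    fun i hi j hj hij => ball_disjoint_ball (by linarith [hsep i hi j hj hij])
  have hsub : (⋃ i ∈ s, ball (Q i) (ρ / 2)) ⊆ ball P (R + ρ / 2) :=
    Set.iUnion₂_subset fun i hi => ball_subset_ball' (by linarith [hQ i hi])
  have hvol : (#s : ℝ≥0∞) * (ENNReal.ofReal ((ρ / 2) ^ finrank ℝ E) * μ (ball 0 1))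
      ≤ ENNReal.ofReal ((R + ρ / 2) ^ finrank ℝ E) * μ (ball 0 1) := by
    calc (#s : ℝ≥0∞) * (ENNReal.ofReal ((ρ / 2) ^ finrank ℝ E) * μ (ball 0 1))
        = ∑ i ∈ s, μ (ball (Q i) (ρ / 2)) := by
          simp only [Measure.addHaar_ball_of_pos μ _ (half_pos hρ), sum_const, nsmul_eq_mul]
      _ = μ (⋃ i ∈ s, ball (Q i) (ρ / 2)) :=
          (measure_biUnion_finset hdisj fun i _ => measurableSet_ball).symm
      _ ≤ μ (ball P (R + ρ / 2)) := measure_mono hsub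
      _ = ENNReal.ofReal ((R + ρ / 2) ^ finrank ℝ E) * μ (ball 0 1) :=
          Measure.addHaar_ball_of_pos μ _ (by positivity)
  rwa [← mul_assoc, ENNReal.mul_le_mul_iff_left (measure_ball_pos μ 0 one_pos).ne'
    measure_ball_lt_top.ne, ← ENNReal.ofReal_natCast, ← ENNReal.ofReal_mul (by positivity),
    ENNReal.ofReal_le_ofReal_iff (by positivity)] at hvol

theorem card_shellIndex_eq_le (hρ : 0 < ρ)
    (hsep : ∀ i ∈ s, ∀ j ∈ s, i ≠ j → ρ ≤ dist (Q i) (Q j)) (n : ℕ) :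
    (#{i ∈ s | shellIndex ρ (dist (Q i) P) = n} : ℝ) ≤ (n + 4) ^ finrank ℝ E := by
  have hpack := card_mul_pow_le_of_separated {i ∈ s | shellIndex ρ (dist (Q i) P) = n} Q P
    (R := ρ + (n + 1) * ρ / 2) hρ (by positivity)
    (fun i hi j hj => hsep i (mem_filter.mp hi).1 j (mem_filter.mp hj).1)
    (fun i hi => by
      have h := lt_add_shellIndex_add_one_mul hρ (dist (Q i) P)
      rw [(mem_filter.mp hi).2] at h
      exact h.le)
  rw [show ρ + (n + 1) * ρ / 2 + ρ / 2 = (n + 4) * (ρ / 2) by ring, mul_pow] at hpack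
  exact le_of_mul_le_mul_right hpack (by positivity)

theorem sum_pow_shellIndex_le (hρ : 0 < ρ)
    (hsep : ∀ i ∈ s, ∀ j ∈ s, i ≠ j → ρ ≤ dist (Q i) (Q j))
    (hq : 6 ^ finrank ℝ E * exp (-ρ / 2) ≤ 1 / 2) :
    ∑ i ∈ s, exp (-ρ / 2) ^ shellIndex ρ (dist (Q i) P) ≤ 2 * 6 ^ finrank ℝ E := by
  set a : ℝ := 6 ^ finrank ℝ E
  set q := a * exp (-ρ / 2)
  have hq0 : 0 ≤ q := by positivity
  have hcard (m : ℕ) : (#{i ∈ s | shellIndex ρ (dist (Q i) P) = m} : ℝ) ≤ a * a ^ m :=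
    calc _ ≤ ((m : ℝ) + 4) ^ finrank ℝ E := card_shellIndex_eq_le s Q P hρ hsep m
      _ ≤ (6 ^ (m + 1)) ^ finrank ℝ E := by gcongr; exact add_four_le_six_pow_succ m
      _ = a * a ^ m := by rw [← pow_mul, mul_comm (m + 1), pow_mul, pow_succ']
  have hterm (m : ℕ) : a * a ^ m * exp (-ρ / 2) ^ m = a * q ^ m := by rw [mul_pow]; ring
  have hgeom : Summable fun m : ℕ => a * q ^ m :=
    (summable_geometric_of_lt_one hq0 (by linarith)).mul_left a
  calc ∑ i ∈ s, exp (-ρ / 2) ^ shellIndex ρ (dist (Q i) P)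
      ≤ ∑' m, a * a ^ m * exp (-ρ / 2) ^ m :=
        sum_comp_le_tsum_of_card_fiber_le s _ (fun m => by positivity) hcard
          (by simpa only [hterm] using hgeom)
    _ = a * (1 - q)⁻¹ := by
        simp only [hterm, tsum_mul_left, tsum_geometric_of_lt_one hq0 (by linarith)]
    _ ≤ a * 2 := by
        gcongr
        rw [inv_le_comm₀ (by linarith) two_pos]
        linarith
    _ = 2 * a := mul_comm _ _

end SeparatedPoints

theorem stmt11_general
    (N : ℕ)
    (w : ℝ → ℝ)
    (C₀ : ℝ) (hC₀ : 0 < C₀) :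
    ∃ ρ₀ C : ℝ, 0 < ρ₀ ∧ 0 < C ∧ (6 : ℝ) ^ N < Real.exp (ρ₀ / 2) ∧
      ∀ ρ : ℝ, ρ₀ ≤ ρ →
        (∀ r : ℝ, ρ ≤ r → w r ≤ C₀ * Real.exp (-r)) →
        ∀ k : ℕ, 1 ≤ k →
          ∀ Q : Fin (k + 1) → EuclideanSpace ℝ (Fin N),
            (∀ i j : Fin (k + 1), i ≠ j → ρ ≤ dist (Q i) (Q j)) →
            (∑ j : Fin k, w (dist (Q j.castSucc) (Q (Fin.last k))))
              ≤ C * Real.exp (-ρ) := by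
  have h6 : (1 : ℝ) ≤ 6 ^ N := one_le_pow₀ (by norm_num)
  have hlog : 0 < log (2 * 6 ^ N) := log_pos (by linarith)
  refine ⟨2 * log (2 * 6 ^ N), 2 * 6 ^ N * C₀, by positivity, by positivity, ?_, ?_⟩
  · rw [mul_div_cancel_left₀ _ two_ne_zero, exp_log (by positivity)]
    linarith
  intro ρ hρ₀ hw k _ Q hsep
  have hρ : 0 < ρ := by linarith
  set d : Fin k → ℝ := fun j => dist (Q j.castSucc) (Q (Fin.last k))
  have hd (j : Fin k) : ρ ≤ d j := hsep _ _ (Fin.castSucc_lt_last j).ne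
  have hshells := sum_pow_shellIndex_le univ (fun j : Fin k => Q j.castSucc) (Q (Fin.last k)) hρ
    (fun i _ j _ hij => hsep _ _ ((Fin.castSucc_injective k).ne hij))
    (by simpa only [finrank_euclideanSpace_fin] using mul_exp_neg_half_le_half (by linarith) hρ₀)
  rw [finrank_euclideanSpace_fin] at hshells
  calc ∑ j, w (d j) ≤ ∑ j, C₀ * (exp (-ρ) * exp (-ρ / 2) ^ shellIndex ρ (d j)) :=
        sum_le_sum fun j _ => (hw _ (hd j)).trans
          (mul_le_mul_of_nonneg_left (exp_neg_le_exp_neg_mul_pow_shellIndex hρ (hd j)) hC₀.le)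
    _ = C₀ * exp (-ρ) * ∑ j, exp (-ρ / 2) ^ shellIndex ρ (d j) := by
        simp only [mul_sum, mul_assoc]
    _ ≤ C₀ * exp (-ρ) * (2 * 6 ^ N) := by gcongr
    _ = 2 * 6 ^ N * C₀ * exp (-ρ) := by ring

/-- If `w(r) ≤ C₀ e^{−r}` for `r ≥ ρ`, then there exist `ρ₀ > 0`
(with `6^N < e^{ρ₀/2}`) and `C > 0`, such that for all `ρ ≥ ρ₀`, all `k ≥ 2`, and all
`ρ`-separated points `Q₁,…,Q_k`, one has `Σ_{j=1}^{k−1} w(|Q_j − Q_k|) ≤ C e^{−ρ}`. -/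
theorem stmt11
    (N : ℕ) (hN : 2 ≤ N)
    (w : ℝ → ℝ)
    (hw_pos : ∀ r : ℝ, 0 ≤ r → 0 < w r)
    (C₀ : ℝ) (hC₀ : 0 < C₀) :
    ∃ ρ₀ C : ℝ, 0 < ρ₀ ∧ 0 < C ∧ (6 : ℝ) ^ N < Real.exp (ρ₀ / 2) ∧
      ∀ ρ : ℝ, ρ₀ ≤ ρ →
        (∀ r : ℝ, ρ ≤ r → w r ≤ C₀ * Real.exp (-r)) →
        ∀ k : ℕ, 1 ≤ k →
          ∀ Q : Fin (k + 1) → EuclideanSpace ℝ (Fin N),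
            (∀ i j : Fin (k + 1), i ≠ j → ρ ≤ dist (Q i) (Q j)) →
            (∑ j : Fin k, w (dist (Q j.castSucc) (Q (Fin.last k))))
              ≤ C * Real.exp (-ρ) :=
  stmt11_general N w C₀ hC₀
end
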